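/- The 8-dimensional Lie algebra with basis S_1, S_2, N_1, …, N_6 and nonzero brackets [S_1,N_1]=N_1, [S_1,N_3]=N_3, [S_1,N_4]=2N_4, [S_1,N_5]=2N_5, [S_1,N_6]=N_6, [S_2,N_2]=N_2, [S_2,N_3]=N_3, [S_2,N_4]=N_4, [S_2,N_5]=2N_5, [S_2,N_6]=2N_6, [N_1,N_2]=N_3, [N_1,N_3]=N_4, [N_1,N_6]=N_5, [N_2,N_3]=N_6, [N_2,N_4]=N_5 (all others zero, and [S_1,S_2]=0) satisfies the Jacobi identity, is solvable with derived series of dimensions (8,6,4,0), and its nilradical is the 6-dimensional ideal span{N_1,…,N_6}, whose derived series has dimensions (6,4,0) and whose lower central series has dimensions (6,4,3,1,0). -/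
import Mathlib


/-- The bilinear bracket on `ℂ^8` with basis `(S₁, S₂, N₁, …, N₆)` (coordinates
`0,…,7`) extended from the nonzero bracket relations
`[S₁,N₁]=N₁, [S₁,N₃]=N₃, [S₁,N₄]=2N₄, [S₁,N₅]=2N₅, [S₁,N₆]=N₆,
[S₂,N₂]=N₂, [S₂,N₃]=N₃, [S₂,N₄]=N₄, [S₂,N₅]=2N₅, [S₂,N₆]=2N₆,
[N₁,N₂]=N₃, [N₁,N₃]=N₄, [N₁,N₆]=N₅, [N₂,N₃]=N₆, [N₂,N₄]=N₅`  (and `[S₁,S₂]=0`). -/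
def n8br (v w : Fin 8 → ℂ) : Fin 8 → ℂ :=
  ![0, 0,
    v 0 * w 2 - v 2 * w 0,
    v 1 * w 3 - v 3 * w 1,
    (v 0 * w 4 - v 4 * w 0) + (v 1 * w 4 - v 4 * w 1) + (v 2 * w 3 - v 3 * w 2),
    2 * (v 0 * w 5 - v 5 * w 0) + (v 1 * w 5 - v 5 * w 1) + (v 2 * w 4 - v 4 * w 2),
    2 * (v 0 * w 6 - v 6 * w 0) + 2 * (v 1 * w 6 - v 6 * w 1)
      + (v 2 * w 7 - v 7 * w 2) + (v 3 * w 5 - v 5 * w 3),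
    (v 0 * w 7 - v 7 * w 0) + 2 * (v 1 * w 7 - v 7 * w 1) + (v 3 * w 4 - v 4 * w 3)]

/-- The span of all brackets between elements of two subspaces. -/
noncomputable def brSpan (P Q : Submodule ℂ (Fin 8 → ℂ)) : Submodule ℂ (Fin 8 → ℂ) :=
  Submodule.span ℂ {u | ∃ x ∈ P, ∃ y ∈ Q, u = n8br x y}

/-- The derived series of the algebra. -/
noncomputable def derS : ℕ → Submodule ℂ (Fin 8 → ℂ)
  | 0 => ⊤
  | k + 1 => brSpan (derS k) (derS k)

/-- The lower central series of a subspace `I`. -/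
noncomputable def lcs (I : Submodule ℂ (Fin 8 → ℂ)) : ℕ → Submodule ℂ (Fin 8 → ℂ)
  | 0 => I
  | k + 1 => brSpan I (lcs I k)

/-- The candidate nilradical `span{N₁, …, N₆}`. -/
noncomputable def nrad : Submodule ℂ (Fin 8 → ℂ) :=
  Submodule.span ℂ ({Pi.single 2 1, Pi.single 3 1, Pi.single 4 1,
    Pi.single 5 1, Pi.single 6 1, Pi.single 7 1} : Set (Fin 8 → ℂ))

section Aux
@[simp] lemma n8br_0 (v w : Fin 8 → ℂ) : n8br v w 0 = 0 := rfl
@[simp] lemma n8br_1 (v w : Fin 8 → ℂ) : n8br v w 1 = 0 := rfl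
@[simp] lemma n8br_2 (v w : Fin 8 → ℂ) : n8br v w 2 = v 0 * w 2 - v 2 * w 0 := rfl
@[simp] lemma n8br_3 (v w : Fin 8 → ℂ) : n8br v w 3 = v 1 * w 3 - v 3 * w 1 := rfl
@[simp] lemma n8br_4 (v w : Fin 8 → ℂ) :
    n8br v w 4 = (v 0 * w 4 - v 4 * w 0) + (v 1 * w 4 - v 4 * w 1) + (v 2 * w 3 - v 3 * w 2) := rfl
@[simp] lemma n8br_5 (v w : Fin 8 → ℂ) :
    n8br v w 5 = 2 * (v 0 * w 5 - v 5 * w 0) + (v 1 * w 5 - v 5 * w 1) + (v 2 * w 4 - v 4 * w 2) := rfl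
@[simp] lemma n8br_6 (v w : Fin 8 → ℂ) :
    n8br v w 6 = 2 * (v 0 * w 6 - v 6 * w 0) + 2 * (v 1 * w 6 - v 6 * w 1)
      + (v 2 * w 7 - v 7 * w 2) + (v 3 * w 5 - v 5 * w 3) := rfl
@[simp] lemma n8br_7 (v w : Fin 8 → ℂ) :
    n8br v w 7 = (v 0 * w 7 - v 7 * w 0) + 2 * (v 1 * w 7 - v 7 * w 1) + (v 3 * w 4 - v 4 * w 3) := rfl

abbrev ee (i : Fin 8) : Fin 8 → ℂ := Pi.single i 1

section Jac
variable (u v w : Fin 8 → ℂ)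
local notation "J" j => n8br u (n8br v w) j + n8br v (n8br w u) j + n8br w (n8br u v) j = 0
lemma jc0 : J (0:Fin 8) := by simp
lemma jc1 : J (1:Fin 8) := by simp
lemma jc2 : J (2:Fin 8) := by
  simp only [n8br_0, n8br_1, n8br_2, n8br_3, n8br_4, n8br_5, n8br_6, n8br_7]; ring
lemma jc3 : J (3:Fin 8) := by
  simp only [n8br_0, n8br_1, n8br_2, n8br_3, n8br_4, n8br_5, n8br_6, n8br_7]; ring
lemma jc4 : J (4:Fin 8) := by
  simp only [n8br_0, n8br_1, n8br_2, n8br_3, n8br_4, n8br_5, n8br_6, n8br_7]; ring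
lemma jc5 : J (5:Fin 8) := by
  simp only [n8br_0, n8br_1, n8br_2, n8br_3, n8br_4, n8br_5, n8br_6, n8br_7]; ring
lemma jc6 : J (6:Fin 8) := by
  simp only [n8br_0, n8br_1, n8br_2, n8br_3, n8br_4, n8br_5, n8br_6, n8br_7]; ring
lemma jc7 : J (7:Fin 8) := by
  simp only [n8br_0, n8br_1, n8br_2, n8br_3, n8br_4, n8br_5, n8br_6, n8br_7]; ring
end Jac

lemma jacobi (u v w : Fin 8 → ℂ) :
    n8br u (n8br v w) + n8br v (n8br w u) + n8br w (n8br u v) = 0 := by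
  funext j
  fin_cases j
  exacts [jc0 u v w, jc1 u v w, jc2 u v w, jc3 u v w, jc4 u v w, jc5 u v w, jc6 u v w,
    jc7 u v w]

noncomputable def A4 : Submodule ℂ (Fin 8 → ℂ) := Submodule.span ℂ {ee 4, ee 5, ee 6, ee 7}
noncomputable def A3 : Submodule ℂ (Fin 8 → ℂ) := Submodule.span ℂ {ee 5, ee 6, ee 7}
noncomputable def A1 : Submodule ℂ (Fin 8 → ℂ) := Submodule.span ℂ {ee 6}

-- coordinate sub modules
noncomputable def Kc (p : Fin 8 → Prop) : Submodule ℂ (Fin 8 → ℂ) where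
  carrier := {v | ∀ i, ¬ p i → v i = 0}
  add_mem' := by intro a b ha hb i hi; simp [ha i hi, hb i hi]
  zero_mem' := by intro i _; rfl
  smul_mem' := by intro c a ha i hi; simp [ha i hi]

lemma mem_nrad (v : Fin 8 → ℂ) (h0 : v 0 = 0) (h1 : v 1 = 0) : v ∈ nrad := by
  have hv : v = v 2 • ee 2 + v 3 • ee 3 + v 4 • ee 4 + v 5 • ee 5 + v 6 • ee 6 + v 7 • ee 7 := by
    funext j; fin_cases j <;> simp [Pi.single_apply, h0, h1]
  rw [hv]
  refine add_mem (add_mem (add_mem (add_mem (add_mem ?_ ?_) ?_) ?_) ?_) ?_ <;>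
    exact Submodule.smul_mem _ _ (Submodule.subset_span (by simp))

lemma mem_A4 (v : Fin 8 → ℂ) (h0 : v 0 = 0) (h1 : v 1 = 0) (h2 : v 2 = 0) (h3 : v 3 = 0) :
    v ∈ A4 := by
  have hv : v = v 4 • ee 4 + v 5 • ee 5 + v 6 • ee 6 + v 7 • ee 7 := by
    funext j; fin_cases j <;> simp [Pi.single_apply, h0, h1, h2, h3]
  rw [hv]
  refine add_mem (add_mem (add_mem ?_ ?_) ?_) ?_ <;>
    exact Submodule.smul_mem _ _ (Submodule.subset_span (by simp [A4]))

lemma mem_A3 (v : Fin 8 → ℂ) (h0 : v 0 = 0) (h1 : v 1 = 0) (h2 : v 2 = 0) (h3 : v 3 = 0)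
    (h4 : v 4 = 0) : v ∈ A3 := by
  have hv : v = v 5 • ee 5 + v 6 • ee 6 + v 7 • ee 7 := by
    funext j; fin_cases j <;> simp [Pi.single_apply, h0, h1, h2, h3, h4]
  rw [hv]
  refine add_mem (add_mem ?_ ?_) ?_ <;>
    exact Submodule.smul_mem _ _ (Submodule.subset_span (by simp [A3]))

lemma mem_A1 (v : Fin 8 → ℂ) (h : ∀ i, i ≠ 6 → v i = 0) : v ∈ A1 := by
  have hv : v = v 6 • ee 6 := by
    funext j; fin_cases j <;>
      simp [Pi.single_apply, h 0 (by decide), h 1 (by decide), h 2 (by decide),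
        h 3 (by decide), h 4 (by decide), h 5 (by decide), h 7 (by decide)]
  rw [hv]
  exact Submodule.smul_mem _ _ (Submodule.subset_span rfl)

lemma nrad_coords {v : Fin 8 → ℂ} (h : v ∈ nrad) : v 0 = 0 ∧ v 1 = 0 := by
  have hle : nrad ≤ Kc (fun i => 2 ≤ (i : ℕ)) := by
    rw [nrad, Submodule.span_le]
    rintro x (rfl | rfl | rfl | rfl | rfl | rfl) <;>
      · intro i hi
        refine Pi.single_eq_of_ne ?_ 1
        rintro rfl; exact hi (by decide)
  exact ⟨hle h 0 (by decide), hle h 1 (by decide)⟩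

lemma A4_coords {v : Fin 8 → ℂ} (h : v ∈ A4) : v 0 = 0 ∧ v 1 = 0 ∧ v 2 = 0 ∧ v 3 = 0 := by
  have hle : A4 ≤ Kc (fun i => 4 ≤ (i : ℕ)) := by
    rw [A4, Submodule.span_le]
    rintro x (rfl | rfl | rfl | rfl) <;>
      · intro i hi
        refine Pi.single_eq_of_ne ?_ 1
        rintro rfl; exact hi (by decide)
  exact ⟨hle h 0 (by decide), hle h 1 (by decide), hle h 2 (by decide), hle h 3 (by decide)⟩

lemma A3_coords {v : Fin 8 → ℂ} (h : v ∈ A3) :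
    v 0 = 0 ∧ v 1 = 0 ∧ v 2 = 0 ∧ v 3 = 0 ∧ v 4 = 0 := by
  have hle : A3 ≤ Kc (fun i => 5 ≤ (i : ℕ)) := by
    rw [A3, Submodule.span_le]
    rintro x (rfl | rfl | rfl) <;>
      · intro i hi
        refine Pi.single_eq_of_ne ?_ 1
        rintro rfl; exact hi (by decide)
  exact ⟨hle h 0 (by decide), hle h 1 (by decide), hle h 2 (by decide),
    hle h 3 (by decide), hle h 4 (by decide)⟩

lemma A1_coords {v : Fin 8 → ℂ} (h : v ∈ A1) : ∀ i, i ≠ 6 → v i = 0 := by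
  have hle : A1 ≤ Kc (fun i => i = 6) := by
    rw [A1, Submodule.span_le]
    rintro x rfl
    intro i hi
    refine Pi.single_eq_of_ne ?_ 1
    rintro rfl; exact hi rfl
  exact fun i hi => hle h i hi

-- bracket identities
lemma br1 : n8br (ee 0) (ee 2) = ee 2 := by funext j; fin_cases j <;> simp [Pi.single_apply]
lemma br2 : n8br (ee 1) (ee 3) = ee 3 := by funext j; fin_cases j <;> simp [Pi.single_apply]
lemma br3 : n8br (ee 2) (ee 3) = ee 4 := by funext j; fin_cases j <;> simp [Pi.single_apply]
lemma br4 : n8br (ee 2) (ee 4) = ee 5 := by funext j; fin_cases j <;> simp [Pi.single_apply]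
lemma br5 : n8br (ee 2) (ee 7) = ee 6 := by funext j; fin_cases j <;> simp [Pi.single_apply]
lemma br6 : n8br (ee 3) (ee 4) = ee 7 := by funext j; fin_cases j <;> simp [Pi.single_apply]

lemma ee_mem_nrad (i : Fin 8) (hi : 2 ≤ (i:ℕ)) : ee i ∈ nrad :=
  mem_nrad _ (Pi.single_eq_of_ne (by rintro rfl; exact absurd hi (by decide)) 1)
    (Pi.single_eq_of_ne (by rintro rfl; exact absurd hi (by decide)) 1)

-- key span equalities
lemma derS1_eq : derS 1 = nrad := by
  apply le_antisymm
  · show brSpan ⊤ ⊤ ≤ nrad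
    rw [brSpan, Submodule.span_le]
    rintro u ⟨x, -, y, -, rfl⟩
    exact mem_nrad _ (n8br_0 x y) (n8br_1 x y)
  · rw [nrad, Submodule.span_le]
    have mem : ∀ a b : Fin 8 → ℂ, n8br a b ∈ derS 1 := fun a b =>
      Submodule.subset_span ⟨a, trivial, b, trivial, rfl⟩
    rintro x (rfl | rfl | rfl | rfl | rfl | rfl)
    · have h := mem (ee 0) (ee 2); rwa [br1] at h
    · have h := mem (ee 1) (ee 3); rwa [br2] at h
    · have h := mem (ee 2) (ee 3); rwa [br3] at h
    · have h := mem (ee 2) (ee 4); rwa [br4] at h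
    · have h := mem (ee 2) (ee 7); rwa [br5] at h
    · have h := mem (ee 3) (ee 4); rwa [br6] at h

lemma brSpan_nrad_nrad : brSpan nrad nrad = A4 := by
  apply le_antisymm
  · rw [brSpan, Submodule.span_le]
    rintro u ⟨x, hx, y, hy, rfl⟩
    obtain ⟨hx0, hx1⟩ := nrad_coords hx
    obtain ⟨hy0, hy1⟩ := nrad_coords hy
    exact mem_A4 _ (by simp) (by simp) (by simp [hx0, hy0]) (by simp [hx1, hy1])
  · rw [A4, Submodule.span_le]
    have mem : ∀ a b : Fin 8 → ℂ, a ∈ nrad → b ∈ nrad → n8br a b ∈ brSpan nrad nrad :=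
      fun a b ha hb => Submodule.subset_span ⟨a, ha, b, hb, rfl⟩
    rintro x (rfl | rfl | rfl | rfl)
    · have h := mem _ _ (ee_mem_nrad 2 (by decide)) (ee_mem_nrad 3 (by decide)); rwa [br3] at h
    · have h := mem _ _ (ee_mem_nrad 2 (by decide)) (ee_mem_nrad 4 (by decide)); rwa [br4] at h
    · have h := mem _ _ (ee_mem_nrad 2 (by decide)) (ee_mem_nrad 7 (by decide)); rwa [br5] at h
    · have h := mem _ _ (ee_mem_nrad 3 (by decide)) (ee_mem_nrad 4 (by decide)); rwa [br6] at h

lemma ee_mem_A4 (i : Fin 8) (hi : 4 ≤ (i:ℕ)) : ee i ∈ A4 :=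
  mem_A4 _ (Pi.single_eq_of_ne (by rintro rfl; exact absurd hi (by decide)) 1)
    (Pi.single_eq_of_ne (by rintro rfl; exact absurd hi (by decide)) 1)
    (Pi.single_eq_of_ne (by rintro rfl; exact absurd hi (by decide)) 1)
    (Pi.single_eq_of_ne (by rintro rfl; exact absurd hi (by decide)) 1)

lemma brSpan_nrad_A4 : brSpan nrad A4 = A3 := by
  apply le_antisymm
  · rw [brSpan, Submodule.span_le]
    rintro u ⟨x, hx, y, hy, rfl⟩
    obtain ⟨hx0, hx1⟩ := nrad_coords hx
    obtain ⟨hy0, hy1, hy2, hy3⟩ := A4_coords hy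
    exact mem_A3 _ (by simp) (by simp) (by simp [hx0, hy0]) (by simp [hx1, hy1])
      (by simp [hx0, hx1, hy0, hy1, hy2, hy3])
  · rw [A3, Submodule.span_le]
    have mem : ∀ a b : Fin 8 → ℂ, a ∈ nrad → b ∈ A4 → n8br a b ∈ brSpan nrad A4 :=
      fun a b ha hb => Submodule.subset_span ⟨a, ha, b, hb, rfl⟩
    rintro x (rfl | rfl | rfl)
    · have h := mem _ _ (ee_mem_nrad 2 (by decide)) (ee_mem_A4 4 (by decide)); rwa [br4] at h
    · have h := mem _ _ (ee_mem_nrad 2 (by decide)) (ee_mem_A4 7 (by decide)); rwa [br5] at h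
    · have h := mem _ _ (ee_mem_nrad 3 (by decide)) (ee_mem_A4 4 (by decide)); rwa [br6] at h

lemma brSpan_nrad_A3 : brSpan nrad A3 = A1 := by
  apply le_antisymm
  · rw [brSpan, Submodule.span_le]
    rintro u ⟨x, hx, y, hy, rfl⟩
    obtain ⟨hx0, hx1⟩ := nrad_coords hx
    obtain ⟨hy0, hy1, hy2, hy3, hy4⟩ := A3_coords hy
    refine mem_A1 _ ?_
    intro i hi
    fin_cases i <;> simp_all
  · rw [A1, Submodule.span_le]
    rintro x rfl
    have h5 : ee 7 ∈ A3 := by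
      refine mem_A3 _ ?_ ?_ ?_ ?_ ?_ <;> exact Pi.single_eq_of_ne (by decide) 1
    have h : n8br (ee 2) (ee 7) ∈ brSpan nrad A3 :=
      Submodule.subset_span ⟨ee 2, ee_mem_nrad 2 (by decide), ee 7, h5, rfl⟩
    rwa [br5] at h

lemma brSpan_nrad_A1 : brSpan nrad A1 = ⊥ := by
  rw [brSpan, eq_bot_iff, Submodule.span_le]
  rintro u ⟨x, hx, y, hy, rfl⟩
  obtain ⟨hx0, hx1⟩ := nrad_coords hx
  have hy' := A1_coords hy
  have : n8br x y = 0 := by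
    funext j
    fin_cases j <;>
      simp [hx0, hx1, hy' 0 (by decide), hy' 1 (by decide), hy' 2 (by decide),
        hy' 3 (by decide), hy' 4 (by decide), hy' 5 (by decide), hy' 7 (by decide)]
  simp [this]

lemma brSpan_A4_A4 : brSpan A4 A4 = ⊥ := by
  rw [brSpan, eq_bot_iff, Submodule.span_le]
  rintro u ⟨x, hx, y, hy, rfl⟩
  obtain ⟨hx0, hx1, hx2, hx3⟩ := A4_coords hx
  obtain ⟨hy0, hy1, hy2, hy3⟩ := A4_coords hy
  have : n8br x y = 0 := by
    funext j
    fin_cases j <;> simp [hx0, hx1, hx2, hx3, hy0, hy1, hy2, hy3]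
  simp [this]

-- dimensions
lemma rank_of_singles (n : ℕ) (g : Fin n → Fin 8) (hg : Function.Injective g) :
    Module.finrank ℂ ↥(Submodule.span ℂ (Set.range fun j => ee (g j))) = n := by
  have hb : ⇑(Pi.basisFun ℂ (Fin 8)) = fun i => ee i := by
    funext i; simp [Pi.basisFun_apply]
  have hli : LinearIndependent ℂ (fun j => ee (g j)) := by
    have := (Pi.basisFun ℂ (Fin 8)).linearIndependent.comp g hg
    rwa [hb] at this
  rw [finrank_span_eq_card hli, Fintype.card_fin]

lemma range6 : (Set.range fun j => ee (![2,3,4,5,6,7] j)) =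
    ({ee 2, ee 3, ee 4, ee 5, ee 6, ee 7} : Set (Fin 8 → ℂ)) := by
  ext x
  constructor
  · rintro ⟨j, rfl⟩
    fin_cases j
    exacts [Or.inl rfl, Or.inr (Or.inl rfl), Or.inr (Or.inr (Or.inl rfl)),
      Or.inr (Or.inr (Or.inr (Or.inl rfl))), Or.inr (Or.inr (Or.inr (Or.inr (Or.inl rfl)))),
      Or.inr (Or.inr (Or.inr (Or.inr (Or.inr rfl))))]
  · rintro (rfl | rfl | rfl | rfl | rfl | rfl)
    exacts [⟨0, rfl⟩, ⟨1, rfl⟩, ⟨2, rfl⟩, ⟨3, rfl⟩, ⟨4, rfl⟩, ⟨5, rfl⟩]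

lemma range4 : (Set.range fun j => ee (![4,5,6,7] j)) =
    ({ee 4, ee 5, ee 6, ee 7} : Set (Fin 8 → ℂ)) := by
  ext x
  constructor
  · rintro ⟨j, rfl⟩
    fin_cases j
    exacts [Or.inl rfl, Or.inr (Or.inl rfl), Or.inr (Or.inr (Or.inl rfl)),
      Or.inr (Or.inr (Or.inr rfl))]
  · rintro (rfl | rfl | rfl | rfl)
    exacts [⟨0, rfl⟩, ⟨1, rfl⟩, ⟨2, rfl⟩, ⟨3, rfl⟩]

lemma range3 : (Set.range fun j => ee (![5,6,7] j)) =
    ({ee 5, ee 6, ee 7} : Set (Fin 8 → ℂ)) := by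
  ext x
  constructor
  · rintro ⟨j, rfl⟩
    fin_cases j
    exacts [Or.inl rfl, Or.inr (Or.inl rfl), Or.inr (Or.inr rfl)]
  · rintro (rfl | rfl | rfl)
    exacts [⟨0, rfl⟩, ⟨1, rfl⟩, ⟨2, rfl⟩]

lemma range1 : (Set.range fun j => ee (![6] j)) = ({ee 6} : Set (Fin 8 → ℂ)) := by
  ext x
  constructor
  · rintro ⟨j, rfl⟩
    fin_cases j
    exact rfl
  · rintro rfl; exact ⟨0, rfl⟩

lemma finrank_nrad : Module.finrank ℂ ↥nrad = 6 := by
  have := rank_of_singles 6 ![2,3,4,5,6,7] (by decide)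
  rwa [range6] at this

lemma finrank_A4 : Module.finrank ℂ ↥A4 = 4 := by
  have := rank_of_singles 4 ![4,5,6,7] (by decide)
  rw [range4] at this; exact this

lemma finrank_A3 : Module.finrank ℂ ↥A3 = 3 := by
  have := rank_of_singles 3 ![5,6,7] (by decide)
  rw [range3] at this; exact this

lemma finrank_A1 : Module.finrank ℂ ↥A1 = 1 := by
  have := rank_of_singles 1 ![6] (by decide)
  rw [range1] at this; exact this

-- maximality
lemma lcs_succ (I : Submodule ℂ (Fin 8 → ℂ)) (m : ℕ) : lcs I (m+1) = brSpan I (lcs I m) := rfl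

lemma nilpotent_ideal_le_nrad (I : Submodule ℂ (Fin 8 → ℂ))
    (hI : ∀ v : Fin 8 → ℂ, ∀ w ∈ I, n8br v w ∈ I) (hn : ∃ k, lcs I k = ⊥) : I ≤ nrad := by
  obtain ⟨k, hk⟩ := hn
  intro v hv
  by_contra hvn
  have hcase : v 0 ≠ 0 ∨ v 1 ≠ 0 := by
    by_contra h
    push_neg at h
    exact hvn (mem_nrad v h.1 h.2)
  rcases hcase with h0 | h1
  · have key : ∀ m, ∃ x ∈ lcs I m, x 2 ≠ 0 ∧ x 0 = 0 := by
      intro m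
      induction m with
      | zero =>
        refine ⟨n8br (ee 2) v, hI _ v hv, ?_, rfl⟩
        simp [Pi.single_apply, h0]
      | succ m ih =>
        obtain ⟨x, hx, hx2, hx0⟩ := ih
        refine ⟨n8br v x, ?_, ?_, rfl⟩
        · rw [lcs_succ]
          exact Submodule.subset_span ⟨v, hv, x, hx, rfl⟩
        · rw [n8br_2, hx0]
          simpa using mul_ne_zero h0 hx2
    obtain ⟨x, hx, hx2, -⟩ := key k
    rw [hk, Submodule.mem_bot] at hx
    exact hx2 (by simp [hx])
  · have key : ∀ m, ∃ x ∈ lcs I m, x 3 ≠ 0 ∧ x 1 = 0 := by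
      intro m
      induction m with
      | zero =>
        refine ⟨n8br (ee 3) v, hI _ v hv, ?_, rfl⟩
        simp [Pi.single_apply, h1]
      | succ m ih =>
        obtain ⟨x, hx, hx3, hx1⟩ := ih
        refine ⟨n8br v x, ?_, ?_, rfl⟩
        · rw [lcs_succ]
          exact Submodule.subset_span ⟨v, hv, x, hx, rfl⟩
        · rw [n8br_3, hx1]
          simpa using mul_ne_zero h1 hx3
    obtain ⟨x, hx, hx3, -⟩ := key k
    rw [hk, Submodule.mem_bot] at hx
    exact hx3 (by simp [hx])

end Aux

/-- **Structure of the symmetry algebra of the submaximal model N.8:** the bracket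
satisfies the Jacobi identity; the algebra is solvable with derived series of dimensions
`(8, 6, 4, 0)`; and its nilradical (the maximal nilpotent ideal) is the 6-dimensional
abelian-by-nilpotent ideal `span{N₁,…,N₆}`, with derived series of dimensions `(6,4,0)`
and lower central series of dimensions `(6,4,3,1,0)`. -/
theorem N8_symmetry_algebra_structure :
    (∀ u v w : Fin 8 → ℂ,
      n8br u (n8br v w) + n8br v (n8br w u) + n8br w (n8br u v) = 0) ∧
    Module.finrank ℂ ↥(derS 0) = 8 ∧ Module.finrank ℂ ↥(derS 1) = 6 ∧
    Module.finrank ℂ ↥(derS 2) = 4 ∧ derS 3 = ⊥ ∧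
    Module.finrank ℂ ↥nrad = 6 ∧
    (∀ v w : Fin 8 → ℂ, w ∈ nrad → n8br v w ∈ nrad) ∧
    Module.finrank ℂ ↥(lcs nrad 1) = 4 ∧ Module.finrank ℂ ↥(lcs nrad 2) = 3 ∧
    Module.finrank ℂ ↥(lcs nrad 3) = 1 ∧ lcs nrad 4 = ⊥ ∧
    brSpan (brSpan nrad nrad) (brSpan nrad nrad) = ⊥ ∧
    (∀ I : Submodule ℂ (Fin 8 → ℂ),
      (∀ v : Fin 8 → ℂ, ∀ w ∈ I, n8br v w ∈ I) → (∃ k, lcs I k = ⊥) → I ≤ nrad) := by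
  have hderS0 : derS 0 = ⊤ := rfl
  have hderS2 : derS 2 = A4 := by
    show brSpan (derS 1) (derS 1) = A4
    rw [derS1_eq, brSpan_nrad_nrad]
  have hderS3 : derS 3 = ⊥ := by
    show brSpan (derS 2) (derS 2) = ⊥
    rw [hderS2, brSpan_A4_A4]
  have hlcs1 : lcs nrad 1 = A4 := by
    rw [lcs_succ]
    exact brSpan_nrad_nrad
  have hlcs2 : lcs nrad 2 = A3 := by
    rw [lcs_succ, hlcs1, brSpan_nrad_A4]
  have hlcs3 : lcs nrad 3 = A1 := by
    rw [lcs_succ, hlcs2, brSpan_nrad_A3]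
  have hlcs4 : lcs nrad 4 = ⊥ := by
    rw [lcs_succ, hlcs3, brSpan_nrad_A1]
  refine ⟨jacobi, ?_, ?_, ?_, hderS3, finrank_nrad, ?_, ?_, ?_, ?_, hlcs4, ?_, ?_⟩
  · rw [hderS0, finrank_top]
    simp
  · rw [derS1_eq]
    exact finrank_nrad
  · rw [hderS2]
    exact finrank_A4
  · exact fun v w _ => mem_nrad _ rfl rfl
  · rw [hlcs1]; exact finrank_A4
  · rw [hlcs2]; exact finrank_A3
  · rw [hlcs3]; exact finrank_A1
  · rw [brSpan_nrad_nrad, brSpan_A4_A4]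
  · exact nilpotent_ideal_le_nrad
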